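/- Let q > 0 and R₀ > 0 be real numbers. Then the function z ↦ exp(iqz)·z^{−3/2} is Lebesgue integrable on [R₀,∞), the improper integral L = lim_{T→∞} ∫_{R₀}^T exp(iqz)·z^{−1/2} dz exists, and the integration-by-parts identity ∫_{R₀}^∞ exp(iqz)·z^{−3/2} dz = 2·exp(iqR₀)/√R₀ + 2iq·L holds. -/

import Mathlib

/-!
Integrate by parts on `[R₀, T]` with `u = exp(iqz)` and `v = z^s`, `s = -1/2`:
`s ∫ u z^{s-1} = u(T) T^s - u(R₀) R₀^s - iq ∫ u z^s`. As `T → ∞` the left side converges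
because `z^{s-1}` is integrable at infinity, and the boundary term `u(T) T^s` tends to `0`
because `|u| = 1`; since `iq ≠ 0`, the truncated integrals of `u z^s` converge as well.
-/

open Complex Real Filter Topology MeasureTheory intervalIntegral

section OscillatoryRpow

variable {q s a : ℝ}

lemma norm_cexp_I_mul_ofReal_mul (q z : ℝ) : ‖cexp (I * q * z)‖ = 1 := by
  simpa [mul_assoc] using norm_exp_I_mul_ofReal (q * z)

lemma hasDerivAt_cexp_I_mul_ofReal_mul (q z : ℝ) :
    HasDerivAt (fun z : ℝ => cexp (I * q * z)) (I * q * cexp (I * q * z)) z := by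
  have h := ((hasDerivAt_id z).ofReal_comp.const_mul (I * q)).cexp
  simpa [mul_comm] using h

lemma norm_cexp_I_mul_mul_rpow (q s : ℝ) {z : ℝ} (hz : 0 ≤ z) :
    ‖cexp (I * q * z) * ((z ^ s : ℝ) : ℂ)‖ = z ^ s := by
  rw [norm_mul, norm_cexp_I_mul_ofReal_mul, one_mul, norm_real, norm_of_nonneg (rpow_nonneg hz s)]

lemma integrableOn_Ioi_cexp_I_mul_mul_rpow (hs : s < -1) (ha : 0 < a) (q : ℝ) :
    IntegrableOn (fun z : ℝ => cexp (I * q * z) * ((z ^ s : ℝ) : ℂ)) (Set.Ioi a) := by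
  refine (integrableOn_Ioi_rpow_of_lt hs ha).mono' ?_ ?_
  · refine ContinuousOn.aestronglyMeasurable ?_ measurableSet_Ioi
    intro z hz
    exact ((by fun_prop : Continuous fun z : ℝ => cexp (I * q * z)).continuousAt.mul
      (continuous_ofReal.continuousAt.comp
        (continuousAt_rpow_const z s (Or.inl (ha.trans hz).ne')))).continuousWithinAt
  · filter_upwards [ae_restrict_mem measurableSet_Ioi] with z hz
    exact (norm_cexp_I_mul_mul_rpow q s (ha.trans hz).le).le

lemma tendsto_cexp_I_mul_mul_rpow_atTop (hs : s < 0) (q : ℝ) :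
    Tendsto (fun z : ℝ => cexp (I * q * z) * ((z ^ s : ℝ) : ℂ)) atTop (𝓝 0) := by
  rw [tendsto_zero_iff_norm_tendsto_zero]
  have h := tendsto_rpow_neg_atTop (neg_pos.mpr hs)
  rw [neg_neg] at h
  refine h.congr' ?_
  filter_upwards [eventually_ge_atTop 0] with z hz
  exact (norm_cexp_I_mul_mul_rpow q s hz).symm

lemma integral_cexp_I_mul_mul_rpow_sub_one {T : ℝ} (ha : 0 < a) (hT : 0 < T) (q s : ℝ) :
    s * ∫ z in a..T, cexp (I * q * z) * ((z ^ (s - 1) : ℝ) : ℂ) =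
      cexp (I * q * T) * ((T ^ s : ℝ) : ℂ) - cexp (I * q * a) * ((a ^ s : ℝ) : ℂ) -
        I * q * ∫ z in a..T, cexp (I * q * z) * ((z ^ s : ℝ) : ℂ) := by
  have hpos : ∀ z ∈ Set.uIcc a T, 0 < z := fun z hz => (lt_inf_iff.mpr ⟨ha, hT⟩).trans_le hz.1
  have hv : ∀ z ∈ Set.uIcc a T, HasDerivAt (fun z : ℝ => ((z ^ s : ℝ) : ℂ))
      ((s * z ^ (s - 1) : ℝ) : ℂ) z := fun z hz =>
    (hasDerivAt_rpow_const (Or.inl (hpos z hz).ne')).ofReal_comp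
  have hv'int : IntervalIntegrable (fun z : ℝ => ((s * z ^ (s - 1) : ℝ) : ℂ)) volume a T := by
    refine ContinuousOn.intervalIntegrable fun z hz => ?_
    exact (continuous_ofReal.continuousAt.comp ((continuousAt_rpow_const z (s - 1)
      (Or.inl (hpos z hz).ne')).const_mul s)).continuousWithinAt
  have ibp := integral_mul_deriv_eq_deriv_mul (fun z _ => hasDerivAt_cexp_I_mul_ofReal_mul q z) hv
    ((by fun_prop : Continuous fun z : ℝ => I * q * cexp (I * q * z)).intervalIntegrable a T)
    hv'int
  rw [← intervalIntegral.integral_const_mul, ← intervalIntegral.integral_const_mul]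
  convert ibp using 2 <;> (congr 1; ext z; push_cast; ring)

theorem tendsto_integral_cexp_I_mul_mul_rpow (hs : s < 0) (ha : 0 < a) (hq : q ≠ 0) :
    Tendsto (fun T : ℝ => ∫ z in a..T, cexp (I * q * z) * ((z ^ s : ℝ) : ℂ)) atTop
      (𝓝 (-(cexp (I * q * a) * ((a ^ s : ℝ) : ℂ) +
        s * ∫ z in Set.Ioi a, cexp (I * q * z) * ((z ^ (s - 1) : ℝ) : ℂ)) / (I * q))) := by
  have hIq : I * q ≠ 0 := mul_ne_zero I_ne_zero (ofReal_ne_zero.mpr hq)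
  have hint := integrableOn_Ioi_cexp_I_mul_mul_rpow (by linarith : s - 1 < -1) ha q
  have hlim := ((((tendsto_cexp_I_mul_mul_rpow_atTop hs q).sub_const
    (cexp (I * q * a) * ((a ^ s : ℝ) : ℂ))).sub
    ((intervalIntegral_tendsto_integral_Ioi a hint tendsto_id).const_mul (s : ℂ))).div_const (I * q))
  rw [zero_sub, ← neg_add'] at hlim
  refine hlim.congr' ?_
  filter_upwards [eventually_gt_atTop 0] with T hT
  rw [id, div_eq_iff hIq, integral_cexp_I_mul_mul_rpow_sub_one ha hT]
  ring

end OscillatoryRpow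

theorem oscillatory_tail_integration_by_parts (q R₀ : ℝ) (hq : 0 < q) (hR₀ : 0 < R₀) :
    IntegrableOn
      (fun z : ℝ => Complex.exp (Complex.I * q * z) * ((z ^ (-(3 / 2) : ℝ) : ℝ) : ℂ))
      (Set.Ici R₀) ∧
    ∃ L : ℂ,
      Filter.Tendsto
        (fun T : ℝ => ∫ z in R₀..T,
          Complex.exp (Complex.I * q * z) * ((z ^ (-(1 / 2) : ℝ) : ℝ) : ℂ))
        Filter.atTop (nhds L) ∧
      (∫ z in Set.Ici R₀, Complex.exp (Complex.I * q * z) * ((z ^ (-(3 / 2) : ℝ) : ℝ) : ℂ))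
        = 2 * Complex.exp (Complex.I * q * R₀) / (Real.sqrt R₀ : ℂ) + 2 * Complex.I * q * L := by
  have hexp : (-(1 / 2) : ℝ) - 1 = -(3 / 2) := by norm_num
  have hsqrt : R₀ ^ (-(1 / 2) : ℝ) = (√R₀)⁻¹ := by rw [sqrt_eq_rpow, rpow_neg hR₀.le]
  have hint := integrableOn_Ioi_cexp_I_mul_mul_rpow (by norm_num : (-(3 / 2) : ℝ) < -1) hR₀ q
  refine ⟨(integrableOn_Ici_iff_integrableOn_Ioi).mpr hint, _,
    tendsto_integral_cexp_I_mul_mul_rpow (by norm_num) hR₀ hq.ne', ?_⟩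
  have hq_ne : (q : ℂ) ≠ 0 := ofReal_ne_zero.mpr hq.ne'
  have hsqrt_ne : (√R₀ : ℂ) ≠ 0 := ofReal_ne_zero.mpr (sqrt_pos.mpr hR₀).ne'
  rw [integral_Ici_eq_integral_Ioi, hexp, hsqrt]
  push_cast
  field_simp
  ring
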